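/- arXiv:0911.3969 — 8 statements merged into one kernel-verified Lean document; each statement's English description precedes it below -/
import Mathlib

section
/- Let H be an oriented graph on k vertices with e(H) arcs, let ε > 0, and let D be an oriented graph on n vertices with bias(D) < ε·n^2. Then hom(H,D) ≥ hom(H̄,D)/3^{e(H)} − (ε/2)·n^k. -/
open Finset

/-- The number of arcs from `A` to `B` in the oriented graph with arc relation `Adj`. -/
def arcsFrom {V : Type*} (Adj : V → V → Prop) [DecidableRel Adj] (A B : Finset V) : ℕ :=
  ((A ×ˢ B).filter fun p => Adj p.1 p.2).card

/-- The total number of arcs. -/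
def numArcs {V : Type*} [Fintype V] (Adj : V → V → Prop) [DecidableRel Adj] : ℕ :=
  arcsFrom Adj Finset.univ Finset.univ

/-- `bias(D) = max { e(A,B) : A,B ⊆ V, e(B,A) ≤ e(A,B)/2 }`. -/
def bias {V : Type*} [Fintype V] [DecidableEq V] (Adj : V → V → Prop) [DecidableRel Adj] : ℕ :=
  Finset.univ.sup fun p : Finset V × Finset V =>
    if 2 * arcsFrom Adj p.2 p.1 ≤ arcsFrom Adj p.1 p.2 then arcsFrom Adj p.1 p.2 else 0

/-- `hom(H,D)`: the number of maps `φ : V(H) → V(D)` sending every arc of `H` to an arc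
of `D` (with the same orientation). -/
def homCount {W V : Type*} [Fintype W] [DecidableEq W] [Fintype V]
    (HAdj : W → W → Prop) [DecidableRel HAdj] (Adj : V → V → Prop) [DecidableRel Adj] : ℕ :=
  (Finset.univ.filter fun φ : W → V => ∀ x y : W, HAdj x y → Adj (φ x) (φ y)).card

/-- `hom(H̄,D)`: the number of maps `φ : V(H) → V(D)` sending every arc of `H` to an arc
of `D` in one of the two directions. -/
def homBarCount {W V : Type*} [Fintype W] [DecidableEq W] [Fintype V]
    (HAdj : W → W → Prop) [DecidableRel HAdj] (Adj : V → V → Prop) [DecidableRel Adj] : ℕ :=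
  (Finset.univ.filter fun φ : W → V =>
      ∀ x y : W, HAdj x y → Adj (φ x) (φ y) ∨ Adj (φ y) (φ x)).card

/-!
Interpolate between `hom(H̄,D)` and `hom(H,D)`: for a set `U` of arcs of `H`, count the maps that
send arcs in `U` to arcs of `D` in either direction and all other arcs forwards. Take an arc
`xy ∈ U` and fix the images of all vertices other than `x, y`. Because `H` is oriented, the
admissible images of `(x, y)` form a rectangle `A × B`, and removing `xy` from `U` changes the
count in this fibre from `e(A,B) + e(B,A)` to `e(A,B)`; by definition of the bias,
`e(A,B) + e(B,A) ≤ 3 e(A,B) + bias(D)`. Summing over the `n^(k-2)` fibres and iterating over the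
`e(H)` arcs gives `hom(H̄,D) ≤ 3^e(H) hom(H,D) + (3^e(H) - 1)/2 · bias(D) n^(k-2)`.
-/

open Function

section Bias

variable {V : Type*} {Adj : V → V → Prop} [DecidableRel Adj]

lemma arcsFrom_add_arcsFrom_le [Fintype V] [DecidableEq V] (A B : Finset V) :
    arcsFrom Adj A B + arcsFrom Adj B A ≤ 3 * arcsFrom Adj A B + bias Adj := by
  by_cases h : arcsFrom Adj B A ≤ 2 * arcsFrom Adj A B
  · omega
  · have hBA : arcsFrom Adj B A ≤ bias Adj :=
      le_sup_of_le (mem_univ (B, A))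
        (le_of_eq (if_pos (show 2 * arcsFrom Adj A B ≤ arcsFrom Adj B A by omega)).symm)
    omega

lemma card_filter_adj_or_adj_product [DecidableEq V] (hD : ∀ x y : V, Adj x y → ¬ Adj y x)
    (A B : Finset V) :
    #{p ∈ A ×ˢ B | Adj p.1 p.2 ∨ Adj p.2 p.1} = arcsFrom Adj A B + arcsFrom Adj B A := by
  have hdisj : Disjoint {p ∈ A ×ˢ B | Adj p.1 p.2} {p ∈ A ×ˢ B | Adj p.2 p.1} :=
    disjoint_filter.2 fun p _ h => hD _ _ h
  rw [filter_or, card_union_of_disjoint hdisj]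
  congr 1
  exact card_equiv (Equiv.prodComm V V) (by simp [and_comm])

lemma card_filter_adj_or_adj_le_of_rect [Fintype V] [DecidableEq V]
    (hD : ∀ x y : V, Adj x y → ¬ Adj y x) {T : Finset (V × V)}
    (hT : ∀ a b c d, (a, b) ∈ T → (c, d) ∈ T → (a, d) ∈ T) :
    #{p ∈ T | Adj p.1 p.2 ∨ Adj p.2 p.1} ≤ 3 * #{p ∈ T | Adj p.1 p.2} + bias Adj := by
  have hprod : T = T.image Prod.fst ×ˢ T.image Prod.snd := by
    ext ⟨a, d⟩
    simp only [mem_product, mem_image, Prod.exists, exists_and_right, exists_eq_right]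
    exact ⟨fun h => ⟨⟨d, h⟩, ⟨a, h⟩⟩, fun ⟨⟨b, hab⟩, ⟨c, hcd⟩⟩ => hT a b c d hab hcd⟩
  rw [hprod, card_filter_adj_or_adj_product hD]
  exact arcsFrom_add_arcsFrom_le _ _

end Bias

section UpdatePair

variable {W V : Type*} [DecidableEq W] {x y : W}

def updatePair (ψ : W → V) (x y : W) (p : V × V) : W → V :=
  update (update ψ x p.1) y p.2

lemma updatePair_apply_left (hxy : x ≠ y) (ψ : W → V) (p : V × V) :
    updatePair ψ x y p x = p.1 := by
  simp [updatePair, hxy]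

lemma updatePair_apply_right (ψ : W → V) (p : V × V) : updatePair ψ x y p y = p.2 := by
  simp [updatePair]

lemma updatePair_apply_eq_of_ne_right (ψ : W → V) (u v v' : V) {z : W} (hzy : z ≠ y) :
    updatePair ψ x y (u, v) z = updatePair ψ x y (u, v') z := by
  simp [updatePair, hzy]

lemma updatePair_apply_eq_of_ne_left (ψ : W → V) (u u' v : V) {z : W} (hzx : z ≠ x) :
    updatePair ψ x y (u, v) z = updatePair ψ x y (u', v) z := by
  by_cases hzy : z = y <;> simp [updatePair, hzx, hzy]

lemma updatePair_updatePair (hxy : x ≠ y) (ψ : W → V) (p : V × V) :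
    updatePair (updatePair ψ x y p) x y (ψ x, ψ y) = ψ := by
  ext z
  by_cases hzy : z = y
  · subst hzy; simp [updatePair]
  · by_cases hzx : z = x
    · subst hzx; simp [updatePair, hzy]
    · simp [updatePair, hzx, hzy]

lemma sum_card_filter_updatePair [Fintype W] [Fintype V] [DecidableEq V] (hxy : x ≠ y)
    (Q : (W → V) → Prop) [DecidablePred Q] :
    ∑ ψ : W → V, #{p : V × V | Q (updatePair ψ x y p)} = Fintype.card V ^ 2 * #{φ | Q φ} := by
  let σ : (W → V) × (V × V) → (W → V) × (V × V) := fun q =>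
    (updatePair q.1 x y q.2, (q.1 x, q.1 y))
  have hσ : Involutive σ := fun ⟨ψ, p⟩ => by
    simp only [σ, updatePair_updatePair hxy, updatePair_apply_left hxy, updatePair_apply_right]
  calc ∑ ψ : W → V, #{p : V × V | Q (updatePair ψ x y p)}
      = ∑ q : (W → V) × (V × V), if Q (σ q).1 then 1 else 0 := by
        simp only [card_filter, Fintype.sum_prod_type, σ]
    _ = ∑ q : (W → V) × (V × V), if Q q.1 then 1 else 0 :=
        Fintype.sum_bijective σ hσ.bijective _ _ fun _ => rfl
    _ = Fintype.card V ^ 2 * #{φ | Q φ} := by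
        rw [Fintype.sum_prod_type, card_filter, mul_sum]
        simp [apply_ite card, sq]

end UpdatePair

section MixedHom

variable {W V : Type*} [DecidableEq W] (HAdj : W → W → Prop) (Adj : V → V → Prop)

def IsMixedHom (U : Finset (W × W)) (φ : W → V) : Prop :=
  ∀ x y, HAdj x y → Adj (φ x) (φ y) ∨ ((x, y) ∈ U ∧ Adj (φ y) (φ x))

instance [Fintype W] [DecidableRel HAdj] [DecidableRel Adj] (U : Finset (W × W)) :
    DecidablePred (IsMixedHom HAdj Adj U) :=
  fun φ => by unfold IsMixedHom; infer_instance

def mixedHomCount [Fintype W] [Fintype V] [DecidableRel HAdj] [DecidableRel Adj]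
    (U : Finset (W × W)) : ℕ :=
  #{φ | IsMixedHom HAdj Adj U φ}

def IsMixedHomOff (U : Finset (W × W)) (x y : W) (φ : W → V) : Prop :=
  ∀ x' y', HAdj x' y' → (x', y') ≠ (x, y) → Adj (φ x') (φ y') ∨ ((x', y') ∈ U ∧ Adj (φ y') (φ x'))

variable {HAdj Adj}

lemma isMixedHom_iff {U : Finset (W × W)} {x y : W} (hxy : HAdj x y) (φ : W → V) :
    IsMixedHom HAdj Adj U φ ↔
      IsMixedHomOff HAdj Adj U x y φ ∧ (Adj (φ x) (φ y) ∨ ((x, y) ∈ U ∧ Adj (φ y) (φ x))) := by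
  refine ⟨fun h => ⟨fun x' y' h' _ => h x' y' h', h x y hxy⟩, fun ⟨hoff, hxy'⟩ x' y' h' => ?_⟩
  by_cases he : (x', y') = (x, y)
  · obtain ⟨rfl, rfl⟩ := Prod.ext_iff.1 he
    exact hxy'
  · exact hoff x' y' h' he

lemma isMixedHomOff_insert {U : Finset (W × W)} {x y : W} (φ : W → V) :
    IsMixedHomOff HAdj Adj (insert (x, y) U) x y φ ↔ IsMixedHomOff HAdj Adj U x y φ := by
  unfold IsMixedHomOff
  refine forall₄_congr fun x' y' _ he => ?_
  rw [mem_insert, or_iff_right he]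

lemma isMixedHomOff_updatePair_rect (hH : ∀ x y : W, HAdj x y → ¬ HAdj y x)
    {U : Finset (W × W)} {x y : W} (hxy : HAdj x y) (ψ : W → V) {a b c d : V}
    (hab : IsMixedHomOff HAdj Adj U x y (updatePair ψ x y (a, b)))
    (hcd : IsMixedHomOff HAdj Adj U x y (updatePair ψ x y (c, d))) :
    IsMixedHomOff HAdj Adj U x y (updatePair ψ x y (a, d)) := by
  intro x' y' h' he
  -- `H` is oriented, so no arc other than `(x, y)` joins `x` and `y`.
  have hsplit : (x' ≠ y ∧ y' ≠ y) ∨ (x' ≠ x ∧ y' ≠ x) := by grind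
  rcases hsplit with ⟨h1, h2⟩ | ⟨h1, h2⟩
  · rw [updatePair_apply_eq_of_ne_right ψ a d b h1, updatePair_apply_eq_of_ne_right ψ a d b h2]
    exact hab x' y' h' he
  · rw [updatePair_apply_eq_of_ne_left ψ a c d h1, updatePair_apply_eq_of_ne_left ψ a c d h2]
    exact hcd x' y' h' he

end MixedHom

section MixedHomCount

variable {W V : Type*} [Fintype W] [DecidableEq W] [Fintype V]
  {HAdj : W → W → Prop} [DecidableRel HAdj] {Adj : V → V → Prop} [DecidableRel Adj]

lemma mixedHomCount_empty : mixedHomCount HAdj Adj ∅ = homCount HAdj Adj :=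
  congrArg card <| filter_congr fun φ _ => by simp [IsMixedHom]

lemma mixedHomCount_arcs :
    mixedHomCount HAdj Adj {p ∈ univ ×ˢ univ | HAdj p.1 p.2} = homBarCount HAdj Adj :=
  congrArg card <| filter_congr fun φ _ => by
    simp only [IsMixedHom, mem_filter, mem_product, mem_univ, true_and]
    exact forall₃_congr fun x y h => by simp [h]

lemma card_isMixedHom_insert_updatePair_le [DecidableEq V]
    (hH : ∀ x y : W, HAdj x y → ¬ HAdj y x) (hD : ∀ x y : V, Adj x y → ¬ Adj y x)
    {U : Finset (W × W)} {x y : W} (hxy : HAdj x y) (hU : (x, y) ∉ U) (ψ : W → V) :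
    #{p : V × V | IsMixedHom HAdj Adj (insert (x, y) U) (updatePair ψ x y p)} ≤
      3 * #{p : V × V | IsMixedHom HAdj Adj U (updatePair ψ x y p)} + bias Adj := by
  classical
  have hne : x ≠ y := by rintro rfl; exact hH _ _ hxy hxy
  set T : Finset (V × V) := {p | IsMixedHomOff HAdj Adj U x y (updatePair ψ x y p)}
  have hinsert :
      ({p : V × V | IsMixedHom HAdj Adj (insert (x, y) U) (updatePair ψ x y p)} : Finset _) =
        {p ∈ T | Adj p.1 p.2 ∨ Adj p.2 p.1} := by
    rw [filter_filter]
    refine filter_congr fun p _ => ?_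
    rw [isMixedHom_iff hxy, isMixedHomOff_insert, updatePair_apply_left hne,
      updatePair_apply_right]
    simp
  have hU' : ({p : V × V | IsMixedHom HAdj Adj U (updatePair ψ x y p)} : Finset _) =
      {p ∈ T | Adj p.1 p.2} := by
    rw [filter_filter]
    refine filter_congr fun p _ => ?_
    rw [isMixedHom_iff hxy, updatePair_apply_left hne, updatePair_apply_right]
    simp [hU]
  rw [hinsert, hU']
  refine card_filter_adj_or_adj_le_of_rect hD fun a b c d hab hcd => ?_
  simp only [T, mem_filter, mem_univ, true_and] at hab hcd ⊢
  exact isMixedHomOff_updatePair_rect hH hxy ψ hab hcd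

lemma mixedHomCount_insert_le [DecidableEq V] (hH : ∀ x y : W, HAdj x y → ¬ HAdj y x)
    (hD : ∀ x y : V, Adj x y → ¬ Adj y x) {U : Finset (W × W)} {x y : W} (hxy : HAdj x y)
    (hU : (x, y) ∉ U) :
    Fintype.card V ^ 2 * mixedHomCount HAdj Adj (insert (x, y) U) ≤
      3 * (Fintype.card V ^ 2 * mixedHomCount HAdj Adj U) +
        Fintype.card V ^ Fintype.card W * bias Adj := by
  have hne : x ≠ y := by rintro rfl; exact hH _ _ hxy hxy
  calc Fintype.card V ^ 2 * mixedHomCount HAdj Adj (insert (x, y) U)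
      = ∑ ψ : W → V,
          #{p : V × V | IsMixedHom HAdj Adj (insert (x, y) U) (updatePair ψ x y p)} :=
        (sum_card_filter_updatePair hne _).symm
    _ ≤ ∑ ψ : W → V,
          (3 * #{p : V × V | IsMixedHom HAdj Adj U (updatePair ψ x y p)} + bias Adj) :=
        sum_le_sum fun ψ _ => card_isMixedHom_insert_updatePair_le hH hD hxy hU ψ
    _ = _ := by
        rw [sum_add_distrib, ← mul_sum, sum_card_filter_updatePair hne, sum_const, card_univ,
          Fintype.card_fun, smul_eq_mul, mixedHomCount]

end MixedHomCount

lemma le_pow_card_mul_add_geom_sum_mul {α R : Type*} [DecidableEq α] [CommSemiring R]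
    [PartialOrder R] [IsOrderedRing R] (f : Finset α → R) (A : Finset α) {c δ : R}
    (hc : 0 ≤ c) (hf : ∀ a ∈ A, ∀ U ⊆ A, a ∉ U → f (insert a U) ≤ c * f U + δ) :
    f A ≤ c ^ #A * f ∅ + (∑ i ∈ range #A, c ^ i) * δ := by
  refine Finset.induction_on' A (by simp) fun a U ha hU haU ih => ?_
  calc f (insert a U) ≤ c * f U + δ := hf a ha U hU haU
    _ ≤ c * (c ^ #U * f ∅ + (∑ i ∈ range #U, c ^ i) * δ) + δ := by gcongr
    _ = _ := by rw [card_insert_of_notMem haU, geom_sum_succ]; ring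

theorem stmt4_general {W V : Type*} [Fintype W] [DecidableEq W] [Fintype V] [DecidableEq V]
    (HAdj : W → W → Prop) [DecidableRel HAdj] (Adj : V → V → Prop) [DecidableRel Adj]
    (hH : ∀ x y : W, HAdj x y → ¬ HAdj y x) (hD : ∀ x y : V, Adj x y → ¬ Adj y x)
    (ε : ℝ)
    (hbias : (bias Adj : ℝ) < ε * (Fintype.card V : ℝ) ^ 2) :
    (homCount HAdj Adj : ℝ) ≥
      (homBarCount HAdj Adj : ℝ) / 3 ^ numArcs HAdj -
        ε / 2 * (Fintype.card V : ℝ) ^ Fintype.card W := by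
  set n := Fintype.card V
  set k := Fintype.card W
  set e := numArcs HAdj
  have hn : (n : ℝ) ≠ 0 := fun h => by
    rw [h, zero_pow two_ne_zero, mul_zero] at hbias
    exact hbias.not_ge (Nat.cast_nonneg _)
  have key : (n ^ 2 * homBarCount HAdj Adj : ℝ) ≤
      3 ^ e * (n ^ 2 * homCount HAdj Adj) + (3 ^ e - 1) / 2 * (n ^ k * bias Adj) := by
    have := le_pow_card_mul_add_geom_sum_mul
      (fun U => (n ^ 2 * mixedHomCount HAdj Adj U : ℝ)) {p ∈ univ ×ˢ univ | HAdj p.1 p.2}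
      (c := 3) (δ := n ^ k * bias Adj) (by norm_num) fun ⟨x, y⟩ hxy U _ hU => by
        exact_mod_cast mixedHomCount_insert_le hH hD (mem_filter.1 hxy).2 hU
    rwa [mixedHomCount_arcs, mixedHomCount_empty, geom_sum_eq (by norm_num),
      show (3 : ℝ) - 1 = 2 by norm_num] at this
  have hbias' : (n : ℝ) ^ k * bias Adj ≤ n ^ k * (ε * n ^ 2) :=
    mul_le_mul_of_nonneg_left hbias.le (by positivity)
  have h3 : (1 : ℝ) ≤ 3 ^ e := one_le_pow₀ (by norm_num)
  rw [ge_iff_le, sub_le_iff_le_add, div_le_iff₀ (by positivity)]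
  refine le_of_mul_le_mul_left ?_ (by positivity : (0 : ℝ) < n ^ 2)
  nlinarith [mul_le_mul_of_nonneg_left hbias' (by positivity : (0 : ℝ) ≤ 3 ^ e)]

/-- If `H` is an oriented graph on `k` vertices and `D` an oriented graph on `n` vertices
with `bias(D) < ε n^2`, then `hom(H,D) ≥ hom(H̄,D)/3^{e(H)} - (ε/2) n^k`. -/
theorem stmt4 {W V : Type*} [Fintype W] [DecidableEq W] [Fintype V] [DecidableEq V]
    (HAdj : W → W → Prop) [DecidableRel HAdj] (Adj : V → V → Prop) [DecidableRel Adj]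
    (hH : ∀ x y : W, HAdj x y → ¬ HAdj y x) (hD : ∀ x y : V, Adj x y → ¬ Adj y x)
    (ε : ℝ) (hε : 0 < ε)
    (hbias : (bias Adj : ℝ) < ε * (Fintype.card V : ℝ) ^ 2) :
    (homCount HAdj Adj : ℝ) ≥
      (homBarCount HAdj Adj : ℝ) / 3 ^ numArcs HAdj -
        ε / 2 * (Fintype.card V : ℝ) ^ Fintype.card W :=
  stmt4_general HAdj Adj hH hD ε hbias
end

section
/- Let D be an oriented graph with e(D) arcs in which every vertex has out-degree at most Δ⁺, where Δ⁺ ≥ 1. Then ow(D) ≥ e(D)/(4·Δ⁺). -/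
open Finset

/-- `ow(D) = max { e(A,B) : A,B ⊆ V, e(B,A) = 0 }`. -/
def ow {V : Type*} [Fintype V] [DecidableEq V] (Adj : V → V → Prop) [DecidableRel Adj] : ℕ :=
  Finset.univ.sup fun p : Finset V × Finset V =>
    if arcsFrom Adj p.2 p.1 = 0 then arcsFrom Adj p.1 p.2 else 0

/-!
Pick a random set `A` by keeping each vertex independently with probability `p = 1/(2Δ⁺)`, and
let `B` be the set of vertices with no arc into `A`, so that `e(B, A) = 0`. An arc `x → y` is
counted in `e(A, B)` as soon as `x ∈ A` and no out-neighbour of `y` lies in `A`; since `x` is not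
an out-neighbour of `y`, this has probability `p (1 - p)^{d⁺(y)} ≥ p (1 - p Δ⁺) = 1/(4Δ⁺)`.
Hence `E[e(A, B)] ≥ e(D)/(4Δ⁺)`, and `ow(D)` is at least this expectation.
-/

section BernoulliWeight

variable {V : Type*} [Fintype V] [DecidableEq V]

/-- The probability of drawing `A` when every element is kept independently with probability
`p`. -/
def bernoulliWeight (p : ℝ) (A : Finset V) : ℝ :=
  p ^ #A * (1 - p) ^ #Aᶜ

lemma bernoulliWeight_nonneg {p : ℝ} (hp₀ : 0 ≤ p) (hp₁ : p ≤ 1) (A : Finset V) :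
    0 ≤ bernoulliWeight p A := by
  unfold bernoulliWeight
  have : 0 ≤ 1 - p := by linarith
  positivity

lemma sum_bernoulliWeight_filter_subset_disjoint (p : ℝ) {I O : Finset V} (hIO : Disjoint I O) :
    ∑ A with I ⊆ A ∧ Disjoint A O, bernoulliWeight p A = p ^ #I * (1 - p) ^ #O := by
  set f : V → ℝ := fun i => if i ∉ O then p else 0
  set g : V → ℝ := fun i => if i ∉ I then 1 - p else 0
  have hterm (A : Finset V) : (∏ i ∈ A, f i) * ∏ i ∈ univ \ A, g i =
      if I ⊆ A ∧ Disjoint A O then bernoulliWeight p A else 0 := by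
    simp only [f, g, prod_ite_zero, ite_zero_mul_ite_zero, prod_const, ← compl_eq_univ_sdiff,
      bernoulliWeight]
    congr 1
    simp only [mem_compl, not_imp_not, disjoint_left, and_comm]
    rfl
  have hsum (i : V) : f i + g i = (if i ∈ I then p else 1) * (if i ∈ O then 1 - p else 1) := by
    have : i ∈ I → i ∉ O := fun h => disjoint_left.mp hIO h
    by_cases hI : i ∈ I <;> by_cases hO : i ∈ O <;> simp_all [f, g]
  rw [sum_filter, ← powerset_univ, ← sum_congr rfl fun A _ => hterm A, ← prod_add,
    prod_congr rfl fun i _ => hsum i, prod_mul_distrib, prod_ite_mem, prod_ite_mem,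
    univ_inter, univ_inter, prod_const, prod_const]

lemma sum_bernoulliWeight (p : ℝ) : ∑ A : Finset V, bernoulliWeight p A = 1 := by
  simpa using sum_bernoulliWeight_filter_subset_disjoint (V := V) p (disjoint_empty_left ∅)

lemma sum_bernoulliWeight_mul_le {p : ℝ} (hp₀ : 0 ≤ p) (hp₁ : p ≤ 1) {f : Finset V → ℝ}
    {c : ℝ} (hf : ∀ A, f A ≤ c) : ∑ A, bernoulliWeight p A * f A ≤ c :=
  calc ∑ A, bernoulliWeight p A * f A
      ≤ ∑ A, bernoulliWeight p A * c :=
        sum_le_sum fun A _ => mul_le_mul_of_nonneg_left (hf A) (bernoulliWeight_nonneg hp₀ hp₁ A)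
    _ = c := by rw [← sum_mul, sum_bernoulliWeight, one_mul]

end BernoulliWeight

lemma inv_two_mul_natCast_le_one (n : ℕ) : (2 * n : ℝ)⁻¹ ≤ 1 := by
  rcases n.eq_zero_or_pos with rfl | hn
  · simp
  · exact inv_le_one_of_one_le₀ (by norm_cast; omega)

lemma inv_four_mul_le_mul_one_sub_pow (n : ℕ) :
    (4 * n : ℝ)⁻¹ ≤ (2 * n : ℝ)⁻¹ * (1 - (2 * n : ℝ)⁻¹) ^ n := by
  rcases n.eq_zero_or_pos with rfl | hn
  · simp
  have hn : (1 : ℝ) ≤ n := by exact_mod_cast hn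
  have hp := inv_two_mul_natCast_le_one n
  have hbernoulli : 1 - n * (2 * n : ℝ)⁻¹ ≤ (1 - (2 * n : ℝ)⁻¹) ^ n := by
    simpa [sub_eq_add_neg] using one_add_mul_le_pow (a := -(2 * n : ℝ)⁻¹) (by linarith) n
  calc (4 * n : ℝ)⁻¹ = (2 * n : ℝ)⁻¹ * (1 - n * (2 * n : ℝ)⁻¹) := by field_simp; ring
    _ ≤ _ := by gcongr

section OrientedGraph

variable {V : Type*} [Fintype V] (Adj : V → V → Prop) [DecidableRel Adj]

def arcs : Finset (V × V) := (univ ×ˢ univ).filter fun z => Adj z.1 z.2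

lemma numArcs_eq_card_arcs : numArcs Adj = #(arcs Adj) := rfl

def outNbhd (v : V) : Finset V := {w | Adj v w}

def noArcsInto (A : Finset V) : Finset V := {y | ∀ a ∈ A, ¬ Adj y a}

lemma arcsFrom_noArcsInto_eq_zero (A : Finset V) : arcsFrom Adj (noArcsInto Adj A) A = 0 := by
  simp +contextual [arcsFrom, noArcsInto, filter_eq_empty_iff]

variable [DecidableEq V]

lemma arcsFrom_le_ow {A B : Finset V} (h : arcsFrom Adj B A = 0) : arcsFrom Adj A B ≤ ow Adj := by
  simpa [ow, h] using le_sup (f := fun p : Finset V × Finset V =>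
    if arcsFrom Adj p.2 p.1 = 0 then arcsFrom Adj p.1 p.2 else 0) (mem_univ (A, B))

lemma arcsFrom_noArcsInto (A : Finset V) :
    arcsFrom Adj A (noArcsInto Adj A) =
      #{z ∈ arcs Adj | z.1 ∈ A ∧ Disjoint A (outNbhd Adj z.2)} := by
  unfold arcsFrom
  congr 1
  ext z
  simp only [arcs, noArcsInto, outNbhd, mem_filter, mem_product, mem_univ, true_and, disjoint_left]
  tauto

lemma sum_bernoulliWeight_mul_arcsFrom_noArcsInto (hasym : ∀ x y, Adj x y → ¬ Adj y x) (p : ℝ) :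
    ∑ A, bernoulliWeight p A * (arcsFrom Adj A (noArcsInto Adj A) : ℝ) =
      ∑ z ∈ arcs Adj, p * (1 - p) ^ #(outNbhd Adj z.2) := by
  simp only [arcsFrom_noArcsInto, card_filter, Nat.cast_sum, Nat.cast_ite, Nat.cast_one,
    Nat.cast_zero, mul_sum, mul_ite, mul_one, mul_zero]
  rw [sum_comm]
  refine sum_congr rfl fun z hz => ?_
  have hx : Disjoint {z.1} (outNbhd Adj z.2) := by
    simpa [outNbhd] using hasym z.1 z.2 (mem_filter.mp hz).2
  simpa [← sum_filter] using sum_bernoulliWeight_filter_subset_disjoint p hx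

end OrientedGraph

theorem stmt9_general {V : Type*} [Fintype V] [DecidableEq V]
    (Adj : V → V → Prop) [DecidableRel Adj]
    (hasym : ∀ x y : V, Adj x y → ¬ Adj y x)
    (Δ : ℕ)
    (hdeg : ∀ v : V, (Finset.univ.filter fun w => Adj v w).card ≤ Δ) :
    (ow Adj : ℝ) ≥ (numArcs Adj : ℝ) / (4 * (Δ : ℝ)) := by
  set p : ℝ := (2 * Δ : ℝ)⁻¹
  have hp₀ : 0 ≤ p := by positivity
  have hp₁ : p ≤ 1 := inv_two_mul_natCast_le_one Δ
  calc (numArcs Adj : ℝ) / (4 * Δ)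
      = ∑ z ∈ arcs Adj, (4 * Δ : ℝ)⁻¹ := by
        simp [numArcs_eq_card_arcs, div_eq_mul_inv]
    _ ≤ ∑ z ∈ arcs Adj, p * (1 - p) ^ #(outNbhd Adj z.2) := by
        refine sum_le_sum fun z _ => (inv_four_mul_le_mul_one_sub_pow Δ).trans ?_
        exact mul_le_mul_of_nonneg_left
          (pow_le_pow_of_le_one (sub_nonneg.mpr hp₁) (sub_le_self 1 hp₀) (hdeg z.2)) hp₀
    _ = ∑ A, bernoulliWeight p A * (arcsFrom Adj A (noArcsInto Adj A) : ℝ) :=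
        (sum_bernoulliWeight_mul_arcsFrom_noArcsInto Adj hasym p).symm
    _ ≤ ow Adj := sum_bernoulliWeight_mul_le hp₀ hp₁ fun A => by
        exact_mod_cast arcsFrom_le_ow Adj (arcsFrom_noArcsInto_eq_zero Adj A)

/-- If every vertex of an oriented graph `D` has out-degree at most `Δ⁺ ≥ 1`, then
`ow(D) ≥ e(D) / (4 Δ⁺)`. -/
theorem stmt9 {V : Type*} [Fintype V] [DecidableEq V]
    (Adj : V → V → Prop) [DecidableRel Adj]
    (hasym : ∀ x y : V, Adj x y → ¬ Adj y x)
    (Δ : ℕ) (hΔ : 1 ≤ Δ)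
    (hdeg : ∀ v : V, (Finset.univ.filter fun w => Adj v w).card ≤ Δ) :
    (ow Adj : ℝ) ≥ (numArcs Adj : ℝ) / (4 * (Δ : ℝ)) :=
  stmt9_general Adj hasym Δ hdeg
end

section
/- Let D be an oriented graph on n vertices with bias(D) ≤ e(D)/2. Then D contains at least e(D)^2/(8n) directed paths of length two, i.e., at least e(D)^2/(8n) ordered pairs of arcs of the form (x→y, y→u). -/
/-!
Call a vertex in-heavy if its in-degree exceeds twice its out-degree. For the set `X` of in-heavy
vertices this gives `2 e(X, V) ≤ e(V, X)`, so `e(V, X) ≤ bias(D) ≤ e(D)/2` and the remaining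
vertices receive at least `e(D)/2` arcs. Each of them is the middle of at least `d⁻(y)²/2` paths
of length two, and Cauchy–Schwarz gives `∑ d⁻(y)² ≥ (e(D)/2)² / n`.
-/

open Finset

/-- The number of directed paths of length two, i.e. triples `(x, y, u)` with arcs
`x→y` and `y→u`. -/
def pathsTwo {V : Type*} [Fintype V] (Adj : V → V → Prop) [DecidableRel Adj] : ℕ :=
  (Finset.univ.filter fun t : V × V × V => Adj t.1 t.2.1 ∧ Adj t.2.1 t.2.2).card

section

variable {V : Type*} [Fintype V] (Adj : V → V → Prop) [DecidableRel Adj]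

def inDegree (y : V) : ℕ := #{x | Adj x y}

def outDegree (x : V) : ℕ := #{y | Adj x y}

lemma arcsFrom_univ_left (B : Finset V) :
    arcsFrom Adj univ B = ∑ y ∈ B, inDegree Adj y := by
  rw [arcsFrom, card_filter, sum_product_right]
  exact sum_congr rfl fun y _ => (card_filter _ _).symm

lemma arcsFrom_univ_right (A : Finset V) :
    arcsFrom Adj A univ = ∑ x ∈ A, outDegree Adj x := by
  rw [arcsFrom, card_filter, sum_product]
  exact sum_congr rfl fun x _ => (card_filter _ _).symm

lemma numArcs_eq_sum_inDegree : numArcs Adj = ∑ y, inDegree Adj y :=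
  arcsFrom_univ_left Adj univ

lemma pathsTwo_eq_sum_inDegree_mul_outDegree :
    pathsTwo Adj = ∑ y, inDegree Adj y * outDegree Adj y := by
  rw [pathsTwo, card_filter, Fintype.sum_prod_type]
  simp_rw [Fintype.sum_prod_type]
  rw [sum_comm]
  refine sum_congr rfl fun y _ => ?_
  rw [inDegree, outDegree, card_filter, card_filter, sum_mul_sum]
  simp_rw [ite_zero_mul_ite_zero, mul_one]

lemma arcsFrom_le_bias [DecidableEq V] {A B : Finset V}
    (h : 2 * arcsFrom Adj B A ≤ arcsFrom Adj A B) : arcsFrom Adj A B ≤ bias Adj := by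
  simpa [bias, h] using le_sup (f := fun p : Finset V × Finset V =>
    if 2 * arcsFrom Adj p.2 p.1 ≤ arcsFrom Adj p.1 p.2 then arcsFrom Adj p.1 p.2 else 0)
    (mem_univ (A, B))

lemma sum_inDegree_filter_heavy_le_bias [DecidableEq V] :
    ∑ y with 2 * outDegree Adj y < inDegree Adj y, inDegree Adj y ≤ bias Adj := by
  rw [← arcsFrom_univ_left]
  apply arcsFrom_le_bias
  rw [arcsFrom_univ_left, arcsFrom_univ_right, mul_sum]
  refine sum_le_sum fun y hy => ?_
  have : 2 * outDegree Adj y < inDegree Adj y := (mem_filter.mp hy).2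
  omega

lemma sum_sq_inDegree_filter_light_le :
    ∑ y with inDegree Adj y ≤ 2 * outDegree Adj y, inDegree Adj y ^ 2 ≤ 2 * pathsTwo Adj := by
  rw [pathsTwo_eq_sum_inDegree_mul_outDegree, mul_sum]
  calc _ ≤ ∑ y with inDegree Adj y ≤ 2 * outDegree Adj y,
          2 * (inDegree Adj y * outDegree Adj y) := by
        refine sum_le_sum fun y hy => ?_
        rw [sq, mul_left_comm]
        exact Nat.mul_le_mul_left _ (mem_filter.mp hy).2
    _ ≤ ∑ y, 2 * (inDegree Adj y * outDegree Adj y) :=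
        sum_le_sum_of_subset (filter_subset _ _)

theorem sq_numArcs_le_of_two_mul_bias_le [DecidableEq V] (h : 2 * bias Adj ≤ numArcs Adj) :
    numArcs Adj ^ 2 ≤ 8 * Fintype.card V * pathsTwo Adj := by
  set S := ∑ y with inDegree Adj y ≤ 2 * outDegree Adj y, inDegree Adj y
  have hsplit :
      numArcs Adj = ∑ y with 2 * outDegree Adj y < inDegree Adj y, inDegree Adj y + S := by
    rw [numArcs_eq_sum_inDegree,
      ← sum_filter_add_sum_filter_not univ fun y => 2 * outDegree Adj y < inDegree Adj y]
    simp only [not_lt, S]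
  have hS : numArcs Adj ≤ 2 * S := by
    have := sum_inDegree_filter_heavy_le_bias Adj
    omega
  have hCS : S ^ 2 ≤
      Fintype.card V * ∑ y with inDegree Adj y ≤ 2 * outDegree Adj y, inDegree Adj y ^ 2 :=
    sq_sum_le_card_mul_sum_sq.trans (Nat.mul_le_mul_right _ (card_le_univ _))
  calc numArcs Adj ^ 2 ≤ (2 * S) ^ 2 := Nat.pow_le_pow_left hS 2
    _ = 4 * S ^ 2 := by ring
    _ ≤ 4 * (Fintype.card V * (2 * pathsTwo Adj)) := by
        gcongr
        exact hCS.trans (Nat.mul_le_mul_left _ (sum_sq_inDegree_filter_light_le Adj))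
    _ = 8 * Fintype.card V * pathsTwo Adj := by ring

end

theorem stmt11_general {V : Type*} [Fintype V] [DecidableEq V]
    (Adj : V → V → Prop) [DecidableRel Adj]
    (hbias : (bias Adj : ℝ) ≤ (numArcs Adj : ℝ) / 2) :
    (pathsTwo Adj : ℝ) ≥ (numArcs Adj : ℝ) ^ 2 / (8 * (Fintype.card V : ℝ)) := by
  have h : 2 * bias Adj ≤ numArcs Adj := by
    exact_mod_cast (by linarith : 2 * (bias Adj : ℝ) ≤ numArcs Adj)
  refine div_le_of_le_mul₀ (by positivity) (by positivity) ?_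
  rw [mul_comm]
  exact_mod_cast sq_numArcs_le_of_two_mul_bias_le Adj h

/-- Every oriented graph `D` on `n` vertices with `bias(D) ≤ e(D)/2` contains at least
`e(D)^2 / (8n)` directed paths of length two. -/
theorem stmt11 {V : Type*} [Fintype V] [DecidableEq V]
    (Adj : V → V → Prop) [DecidableRel Adj]
    (hasym : ∀ x y : V, Adj x y → ¬ Adj y x)
    (hbias : (bias Adj : ℝ) ≤ (numArcs Adj : ℝ) / 2) :
    (pathsTwo Adj : ℝ) ≥ (numArcs Adj : ℝ) ^ 2 / (8 * (Fintype.card V : ℝ)) :=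
  stmt11_general Adj hbias
end

section
/- Let ε > 0 and let D be an oriented graph on n vertices with bias(D) < ε·e(D)^2/n^2. Then the number of unbalanced directed paths of length two in D is at most 8ε·e(D)^2/n. -/
open Finset

/-- `d^{+-}(x,u)`: the number of directed paths of length two from `x` to `u`. -/
def dpm {V : Type*} [Fintype V] (Adj : V → V → Prop) [DecidableRel Adj] (x u : V) : ℕ :=
  (Finset.univ.filter fun y : V => Adj x y ∧ Adj y u).card

/-- The number of unbalanced directed paths of length two: triples `(x, y, u)` with arcs
`x→y`, `y→u` such that `d^{+-}(x,u) > 16 d^{+-}(u,x)`. -/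
def unbalancedPathsTwo {V : Type*} [Fintype V] (Adj : V → V → Prop) [DecidableRel Adj] : ℕ :=
  (Finset.univ.filter fun t : V × V × V =>
      Adj t.1 t.2.1 ∧ Adj t.2.1 t.2.2 ∧ 16 * dpm Adj t.2.2 t.1 < dpm Adj t.1 t.2.2).card

/-! The unbalanced paths are counted as `S = ∑ d⁺⁻(x,u)` over the unbalanced pairs `(x,u)`.
Applying `e(A,B) ≤ bias + 2 e(B,A)` to `A` = the unbalanced partners `x` of a vertex `u` and
`B = N⁻(u)`, and then to `A = N⁻(x)` and `B` = the unbalanced partners `u` of `x`, trades `d⁺⁻(x,u)`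
for the number of common in-neighbours of `x` and `u`, and that for `d⁺⁻(u,x)`, each time at the
cost of `n · bias`. Hence `S ≤ 3 n bias + 4 ∑ d⁺⁻(u,x) ≤ 3 n bias + S / 4`, so `S ≤ 4 n bias`. -/

section OrientedGraph

variable {V : Type*} (Adj : V → V → Prop) [DecidableRel Adj]

lemma arcsFrom_eq_sum_left (A B : Finset V) :
    arcsFrom Adj A B = ∑ x ∈ A, #{y ∈ B | Adj x y} := by
  rw [arcsFrom, card_filter, sum_product]
  simp only [card_filter]

lemma arcsFrom_eq_sum_right (A B : Finset V) :
    arcsFrom Adj A B = ∑ y ∈ B, #{x ∈ A | Adj x y} := by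
  rw [arcsFrom, card_filter, sum_product_right]
  simp only [card_filter]

variable [Fintype V]

def inNbrs (u : V) : Finset V := {y | Adj y u}

def commonInNbrs (x u : V) : ℕ := #{y | Adj y x ∧ Adj y u}

lemma commonInNbrs_comm (x u : V) : commonInNbrs Adj x u = commonInNbrs Adj u x := by
  simp only [commonInNbrs, and_comm]

lemma arcsFrom_inNbrs_right (A : Finset V) (u : V) :
    arcsFrom Adj A (inNbrs Adj u) = ∑ x ∈ A, dpm Adj x u := by
  simp only [arcsFrom_eq_sum_left, inNbrs, filter_filter, dpm, and_comm]

lemma arcsFrom_inNbrs_left (B : Finset V) (x : V) :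
    arcsFrom Adj (inNbrs Adj x) B = ∑ u ∈ B, commonInNbrs Adj x u := by
  simp only [arcsFrom_eq_sum_right, inNbrs, filter_filter, commonInNbrs]

lemma arcsFrom_le_bias_add [DecidableEq V] (A B : Finset V) :
    arcsFrom Adj A B ≤ bias Adj + 2 * arcsFrom Adj B A := by
  by_cases h : 2 * arcsFrom Adj B A ≤ arcsFrom Adj A B
  · have hAB := le_sup (f := fun p : Finset V × Finset V =>
      if 2 * arcsFrom Adj p.2 p.1 ≤ arcsFrom Adj p.1 p.2 then arcsFrom Adj p.1 p.2 else 0)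
      (mem_univ (A, B))
    simp only [h, if_true] at hAB
    exact le_add_right hAB
  · omega

lemma sum_dpm_le_bias_add [DecidableEq V] (A : Finset V) (u : V) :
    ∑ x ∈ A, dpm Adj x u ≤ bias Adj + 2 * ∑ x ∈ A, commonInNbrs Adj x u := by
  simpa only [arcsFrom_inNbrs_right, arcsFrom_inNbrs_left, commonInNbrs_comm Adj u] using
    arcsFrom_le_bias_add Adj A (inNbrs Adj u)

lemma sum_commonInNbrs_le_bias_add [DecidableEq V] (B : Finset V) (x : V) :
    ∑ u ∈ B, commonInNbrs Adj x u ≤ bias Adj + 2 * ∑ u ∈ B, dpm Adj u x := by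
  simpa only [arcsFrom_inNbrs_right, arcsFrom_inNbrs_left] using
    arcsFrom_le_bias_add Adj (inNbrs Adj x) B

lemma sum_dpm_le_bias_add_sum_dpm_swap [DecidableEq V] (P : V → V → Prop) [DecidableRel P] :
    ∑ x, ∑ u with P x u, dpm Adj x u ≤
      3 * (Fintype.card V * bias Adj) + 4 * ∑ x, ∑ u with P x u, dpm Adj u x := by
  have swap (f : V → V → ℕ) :
      ∑ x, ∑ u with P x u, f x u = ∑ u, ∑ x with P x u, f x u :=
    sum_comm' (by simp)
  have hcommon : ∑ u, ∑ x with P x u, commonInNbrs Adj x u ≤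
      Fintype.card V * bias Adj + 2 * ∑ x, ∑ u with P x u, dpm Adj u x := by
    rw [← swap]
    calc ∑ x, ∑ u with P x u, commonInNbrs Adj x u
        ≤ ∑ x : V, (bias Adj + 2 * ∑ u with P x u, dpm Adj u x) :=
          sum_le_sum fun x _ => sum_commonInNbrs_le_bias_add Adj _ x
      _ = _ := by simp [sum_add_distrib, mul_sum]
  calc ∑ x, ∑ u with P x u, dpm Adj x u
      = ∑ u, ∑ x with P x u, dpm Adj x u := swap _
    _ ≤ ∑ u : V, (bias Adj + 2 * ∑ x with P x u, commonInNbrs Adj x u) :=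
        sum_le_sum fun u _ => sum_dpm_le_bias_add Adj _ u
    _ = Fintype.card V * bias Adj + 2 * ∑ u, ∑ x with P x u, commonInNbrs Adj x u := by
        simp [sum_add_distrib, mul_sum]
    _ ≤ _ := by omega

lemma unbalancedPathsTwo_eq_sum :
    unbalancedPathsTwo Adj =
      ∑ x, ∑ u with 16 * dpm Adj u x < dpm Adj x u, dpm Adj x u := by
  rw [unbalancedPathsTwo, card_filter]
  simp only [Fintype.sum_prod_type]
  refine sum_congr rfl fun x _ => ?_
  rw [sum_comm, sum_filter]
  refine sum_congr rfl fun u _ => ?_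
  by_cases h : 16 * dpm Adj u x < dpm Adj x u
  · simp only [h, and_true, if_true]
    rw [dpm, card_filter]
  · simp [h]

lemma unbalancedPathsTwo_le [DecidableEq V] :
    unbalancedPathsTwo Adj ≤ 4 * (Fintype.card V * bias Adj) := by
  have hswap : 16 * ∑ x, ∑ u with 16 * dpm Adj u x < dpm Adj x u, dpm Adj u x ≤
      ∑ x, ∑ u with 16 * dpm Adj u x < dpm Adj x u, dpm Adj x u := by
    simp only [mul_sum]
    exact sum_le_sum fun x _ => sum_le_sum fun u hu => (mem_filter.mp hu).2.le
  have := sum_dpm_le_bias_add_sum_dpm_swap Adj fun x u => 16 * dpm Adj u x < dpm Adj x u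
  rw [unbalancedPathsTwo_eq_sum]
  omega

end OrientedGraph

theorem stmt12_general {V : Type*} [Fintype V] [DecidableEq V]
    (Adj : V → V → Prop) [DecidableRel Adj]
    (ε : ℝ)
    (hbias : (bias Adj : ℝ) < ε * (numArcs Adj : ℝ) ^ 2 / (Fintype.card V : ℝ) ^ 2) :
    (unbalancedPathsTwo Adj : ℝ) ≤
      8 * ε * (numArcs Adj : ℝ) ^ 2 / (Fintype.card V : ℝ) := by
  have hU : (unbalancedPathsTwo Adj : ℝ) ≤ 4 * ((Fintype.card V : ℝ) * bias Adj) := by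
    exact_mod_cast unbalancedPathsTwo_le Adj
  rcases (Nat.cast_nonneg (α := ℝ) (Fintype.card V)).eq_or_lt with hn | hn
  · rw [← hn] at hU ⊢
    simpa using hU
  set n : ℝ := (Fintype.card V : ℝ)
  set e : ℝ := (numArcs Adj : ℝ)
  have hlt : n * bias Adj < ε * e ^ 2 / n := calc
    n * bias Adj < n * (ε * e ^ 2 / n ^ 2) := by gcongr
    _ = ε * e ^ 2 / n := by field_simp
  have hb : 0 ≤ n * bias Adj := by positivity
  rw [show 8 * ε * e ^ 2 / n = 8 * (ε * e ^ 2 / n) by ring]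
  linarith

/-- If `bias(D) < ε e(D)^2 / n^2` then the number of unbalanced directed paths of length
two in `D` is at most `8 ε e(D)^2 / n`. -/
theorem stmt12 {V : Type*} [Fintype V] [DecidableEq V]
    (Adj : V → V → Prop) [DecidableRel Adj]
    (hasym : ∀ x y : V, Adj x y → ¬ Adj y x)
    (ε : ℝ) (hε : 0 < ε)
    (hbias : (bias Adj : ℝ) < ε * (numArcs Adj : ℝ) ^ 2 / (Fintype.card V : ℝ) ^ 2) :
    (unbalancedPathsTwo Adj : ℝ) ≤
      8 * ε * (numArcs Adj : ℝ) ^ 2 / (Fintype.card V : ℝ) :=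
  stmt12_general Adj ε hbias
end

section
/- Let D' be an oriented graph, let f > 0, and let l be a positive integer. If bias_{0.9}(D') < f and D is the l-blow-up of D', then bias(D) < 16·f·l^2. -/
/-!
A vertex set `A` of the blow-up enters the arc counts only through its fibre sizes
`a i = |A ∩ V_i| ≤ l`, and `e_D(A,B) = ∑_{i→j} a i * b j`. Writing `a i = #{u < l | u < a i}`
splits `e_D(A,B)` into the `l²` terms `e_{D'}(A_u, B_v)` of the level sets `A_u = {i | u < a i}`.
Each term satisfies `e(A_u,B_v) ≤ bias_γ(D') + γ⁻¹ e(B_v,A_u)`: either the pair is admissible for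
`bias_γ`, or `γ e(A_u,B_v) < e(B_v,A_u)`. Summing gives `e_D(A,B) ≤ l² bias_γ(D') + γ⁻¹ e_D(B,A)`,
so `2 e_D(B,A) ≤ e_D(A,B)` forces `e_D(A,B) ≤ 2γ/(2γ-1) · l² bias_γ(D')`, which is
`9/4 · l² bias_{0.9}(D')` for `γ = 0.9`.
-/

open Finset

open scoped Classical

/-- `bias_γ(D) = max { e(A,B) : A,B ⊆ V, e(B,A) ≤ γ e(A,B) }`. -/
noncomputable def biasGamma {V : Type*} [Fintype V] [DecidableEq V]
    (Adj : V → V → Prop) [DecidableRel Adj] (γ : ℝ) : ℕ :=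
  Finset.univ.sup fun p : Finset V × Finset V =>
    if (arcsFrom Adj p.2 p.1 : ℝ) ≤ γ * (arcsFrom Adj p.1 p.2 : ℝ) then
      arcsFrom Adj p.1 p.2 else 0

/-- The `l`-blow-up of an oriented graph with arc relation `Adj'`: each vertex is
replaced by `l` copies, and there is an arc from every copy of `i` to every copy of `j`
whenever `i→j` is an arc. -/
def blowupAdj {W : Type*} (Adj' : W → W → Prop) (l : ℕ) :
    W × Fin l → W × Fin l → Prop :=
  fun p q => Adj' p.1 q.1

instance {W : Type*} (Adj' : W → W → Prop) [inst : DecidableRel Adj'] (l : ℕ) :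
    DecidableRel (blowupAdj Adj' l) :=
  fun p q => inst p.1 q.1

lemma arcsFrom_eq_sum_sum {V : Type*} (Adj : V → V → Prop) [DecidableRel Adj] (A B : Finset V) :
    arcsFrom Adj A B = ∑ x ∈ A, ∑ y ∈ B, if Adj x y then 1 else 0 := by
  rw [arcsFrom, card_filter, sum_product]

section Bias

variable {V : Type*} [Fintype V] [DecidableEq V] (Adj : V → V → Prop) [DecidableRel Adj]

lemma arcsFrom_le_biasGamma {γ : ℝ} {A B : Finset V}
    (h : (arcsFrom Adj B A : ℝ) ≤ γ * arcsFrom Adj A B) : arcsFrom Adj A B ≤ biasGamma Adj γ := by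
  have := le_sup (f := fun p : Finset V × Finset V =>
    if (arcsFrom Adj p.2 p.1 : ℝ) ≤ γ * arcsFrom Adj p.1 p.2 then arcsFrom Adj p.1 p.2 else 0)
    (mem_univ (A, B))
  rwa [if_pos h] at this

lemma arcsFrom_le_biasGamma_add_inv_mul {γ : ℝ} (hγ : 0 < γ) (A B : Finset V) :
    (arcsFrom Adj A B : ℝ) ≤ biasGamma Adj γ + γ⁻¹ * arcsFrom Adj B A := by
  by_cases h : (arcsFrom Adj B A : ℝ) ≤ γ * arcsFrom Adj A B
  · have hle : (arcsFrom Adj A B : ℝ) ≤ biasGamma Adj γ := by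
      exact_mod_cast arcsFrom_le_biasGamma Adj h
    have : 0 ≤ γ⁻¹ * arcsFrom Adj B A := by positivity
    linarith
  · have hlt : (arcsFrom Adj A B : ℝ) < γ⁻¹ * arcsFrom Adj B A :=
      (lt_inv_mul_iff₀ hγ).2 (not_le.1 h)
    have : (0 : ℝ) ≤ biasGamma Adj γ := Nat.cast_nonneg _
    linarith

lemma bias_le {c : ℝ} (hc : 0 ≤ c)
    (h : ∀ A B : Finset V, 2 * arcsFrom Adj B A ≤ arcsFrom Adj A B → (arcsFrom Adj A B : ℝ) ≤ c) :
    (bias Adj : ℝ) ≤ c := by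
  obtain ⟨⟨A, B⟩, -, hAB⟩ := exists_mem_eq_sup (univ : Finset (Finset V × Finset V))
    univ_nonempty fun p =>
      if 2 * arcsFrom Adj p.2 p.1 ≤ arcsFrom Adj p.1 p.2 then arcsFrom Adj p.1 p.2 else 0
  rw [bias, hAB]
  split_ifs with hBA
  · exact h A B hBA
  · simpa using hc

end Bias

section WeightedArcs

variable {W : Type*} [Fintype W]

def weightedArcs (Adj : W → W → Prop) [DecidableRel Adj] (a b : W → ℕ) : ℕ :=
  ∑ p : W × W with Adj p.1 p.2, a p.1 * b p.2

lemma weightedArcs_sum_sum (Adj : W → W → Prop) [DecidableRel Adj] {ι κ : Type*} (s : Finset ι)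
    (t : Finset κ) (a : ι → W → ℕ) (b : κ → W → ℕ) :
    weightedArcs Adj (∑ u ∈ s, a u) (∑ v ∈ t, b v) =
      ∑ u ∈ s, ∑ v ∈ t, weightedArcs Adj (a u) (b v) := by
  simp only [weightedArcs, Finset.sum_apply, sum_mul_sum]
  rw [sum_comm]
  exact sum_congr rfl fun u _ => sum_comm

end WeightedArcs

section Blowup

variable {W : Type*} [DecidableEq W] {l : ℕ}

def fiberCard (A : Finset (W × Fin l)) (i : W) : ℕ := #{k | (i, k) ∈ A}

lemma fiberCard_le (A : Finset (W × Fin l)) (i : W) : fiberCard A i ≤ l :=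
  (card_filter_le _ _).trans_eq (card_fin l)

variable [Fintype W]

lemma sum_comp_fst_eq_sum_fiberCard {M : Type*} [AddCommMonoid M] (A : Finset (W × Fin l))
    (g : W → M) : ∑ x ∈ A, g x.1 = ∑ i, fiberCard A i • g i := by
  rw [← Fintype.sum_ite_mem, Fintype.sum_prod_type]
  simp [fiberCard, sum_ite]

def levelSet (A : Finset (W × Fin l)) (u : ℕ) : Finset W := {i | u < fiberCard A i}

lemma fiberCard_eq_sum_levelSet (A : Finset (W × Fin l)) :
    fiberCard A = ∑ u ∈ range l, fun i => if i ∈ levelSet A u then 1 else 0 := by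
  ext i
  have hc := fiberCard_le A i
  simp only [levelSet, mem_filter_univ, Finset.sum_apply, sum_boole, Nat.cast_id]
  rw [show ({u ∈ range l | u < fiberCard A i} : Finset ℕ) = range (fiberCard A i) by
    ext u; simp only [mem_filter, mem_range]; omega, card_range]

variable (Adj : W → W → Prop) [DecidableRel Adj]

lemma arcsFrom_eq_weightedArcs (S T : Finset W) :
    arcsFrom Adj S T =
      weightedArcs Adj (fun i => if i ∈ S then 1 else 0) (fun j => if j ∈ T then 1 else 0) := by
  rw [arcsFrom_eq_sum_sum, weightedArcs, sum_filter, Fintype.sum_prod_type,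
    ← Fintype.sum_ite_mem]
  refine sum_congr rfl fun i _ => ?_
  rw [← Fintype.sum_ite_mem]
  split_ifs
  · exact sum_congr rfl fun j _ => by split_ifs <;> simp
  · simp

lemma arcsFrom_blowupAdj (A B : Finset (W × Fin l)) :
    arcsFrom (blowupAdj Adj l) A B = weightedArcs Adj (fiberCard A) (fiberCard B) := calc
  _ = ∑ x ∈ A, ∑ y ∈ B, if Adj x.1 y.1 then 1 else 0 := arcsFrom_eq_sum_sum _ A B
  _ = ∑ x ∈ A, ∑ j, fiberCard B j • if Adj x.1 j then 1 else 0 :=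
    sum_congr rfl fun x _ => sum_comp_fst_eq_sum_fiberCard B fun j => if Adj x.1 j then 1 else 0
  _ = ∑ i, fiberCard A i • ∑ j, fiberCard B j • if Adj i j then 1 else 0 :=
    sum_comp_fst_eq_sum_fiberCard A fun i => ∑ j, fiberCard B j • if Adj i j then 1 else 0
  _ = _ := by
    simp only [weightedArcs, sum_filter, Fintype.sum_prod_type, smul_eq_mul, mul_sum, mul_ite,
      mul_one, mul_zero]

lemma arcsFrom_blowupAdj_eq_sum_levelSet (A B : Finset (W × Fin l)) :
    arcsFrom (blowupAdj Adj l) A B =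
      ∑ u ∈ range l, ∑ v ∈ range l, arcsFrom Adj (levelSet A u) (levelSet B v) := by
  rw [arcsFrom_blowupAdj, fiberCard_eq_sum_levelSet A, fiberCard_eq_sum_levelSet B,
    weightedArcs_sum_sum]
  simp only [arcsFrom_eq_weightedArcs]

lemma arcsFrom_blowupAdj_le {γ : ℝ} (hγ : 0 < γ) (A B : Finset (W × Fin l)) :
    (arcsFrom (blowupAdj Adj l) A B : ℝ) ≤
      l ^ 2 * biasGamma Adj γ + γ⁻¹ * arcsFrom (blowupAdj Adj l) B A := by
  rw [arcsFrom_blowupAdj_eq_sum_levelSet]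
  conv_rhs => rw [arcsFrom_blowupAdj_eq_sum_levelSet Adj B A, sum_comm]
  push_cast
  calc _ ≤ ∑ u ∈ range l, ∑ v ∈ range l,
        (biasGamma Adj γ + γ⁻¹ * arcsFrom Adj (levelSet B v) (levelSet A u) : ℝ) := by
        gcongr with u _ v _
        exact arcsFrom_le_biasGamma_add_inv_mul Adj hγ _ _
    _ = _ := by simp [sum_add_distrib, mul_sum]; ring

lemma bias_blowupAdj_le {γ : ℝ} (hγ : 1 / 2 < γ) :
    (bias (blowupAdj Adj l) : ℝ) ≤ 2 * γ / (2 * γ - 1) * l ^ 2 * biasGamma Adj γ := by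
  have hγ0 : 0 < γ := by linarith
  have hγ1 : 0 < 2 * γ - 1 := by linarith
  refine bias_le _ (by positivity) fun A B hBA => ?_
  have hAB := mul_le_mul_of_nonneg_left (arcsFrom_blowupAdj_le Adj hγ0 A B) hγ0.le
  rw [mul_add, mul_inv_cancel_left₀ hγ0.ne'] at hAB
  have hBA' : (2 * arcsFrom (blowupAdj Adj l) B A : ℝ) ≤ arcsFrom (blowupAdj Adj l) A B := by
    exact_mod_cast hBA
  rw [div_mul_eq_mul_div, div_mul_eq_mul_div, le_div_iff₀ hγ1]
  linarith

end Blowup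

theorem stmt15_general {W : Type*} [Fintype W] [DecidableEq W]
    (Adj' : W → W → Prop) [DecidableRel Adj']
    (f : ℝ) (l : ℕ) (hl : 0 < l)
    (hbias : (biasGamma Adj' (0.9 : ℝ) : ℝ) < f) :
    (bias (blowupAdj Adj' l) : ℝ) < 16 * f * (l : ℝ) ^ 2 := by
  have hb : (0 : ℝ) ≤ biasGamma Adj' 0.9 := Nat.cast_nonneg _
  have hl2 : (0 : ℝ) < l ^ 2 := by positivity
  calc (bias (blowupAdj Adj' l) : ℝ)
      ≤ 2 * 0.9 / (2 * 0.9 - 1) * l ^ 2 * biasGamma Adj' 0.9 :=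
        bias_blowupAdj_le Adj' (by norm_num)
    _ < 16 * f * l ^ 2 := by nlinarith

/-- If `bias_{0.9}(D') < f` and `D` is the `l`-blow-up of `D'`, then
`bias(D) < 16 f l^2`. -/
theorem stmt15 {W : Type*} [Fintype W] [DecidableEq W]
    (Adj' : W → W → Prop) [DecidableRel Adj']
    (hasym : ∀ x y : W, Adj' x y → ¬ Adj' y x)
    (f : ℝ) (hf : 0 < f) (l : ℕ) (hl : 0 < l)
    (hbias : (biasGamma Adj' (0.9 : ℝ) : ℝ) < f) :
    (bias (blowupAdj Adj' l) : ℝ) < 16 * f * (l : ℝ) ^ 2 :=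
  stmt15_general Adj' f l hl hbias
end

section
/- For every n ≥ 2 there exists a finite simple graph G on n vertices with at least n^{3/2}/20 edges which contains no cycle of length four. -/
/-!
Over a field `F`, join distinct points `(a, b)`, `(c, d)` of `F²` when `b + d = a c`. If
`x y z w` is a 4-cycle, the alternating sum of its four edge equations reads
`(x₁ - z₁)(y₁ - w₁) = 0`, and either factor vanishing forces `x = z` or `y = w`. Each pair
`(x, y₁)` determines exactly one solution `y`, and when `2 ≠ 0` exactly `q` of the `q³` solutions
are loops, so there are `(q³ - q)/2` edges. For `n ≥ 16`, Bertrand's postulate gives a prime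
`p ≥ 3` with `p² ≤ n ≤ 4p²`; this graph over `𝔽_p` embeds in `n` vertices and has
`(p³ - p)/2 ≥ (2p)³/20 ≥ n^{3/2}/20` edges. For `n ≤ 16` the star graph is enough.
-/

open Finset

namespace SimpleGraph

variable {V W : Type*}

/-- Adjacent vertices are distinct, so a closed walk `a b c d a` is a 4-cycle iff `a ≠ c`, `b ≠ d`. -/
def FourCycleFree (G : SimpleGraph V) : Prop :=
  ∀ ⦃a b c d⦄, G.Adj a b → G.Adj b c → G.Adj c d → G.Adj d a → a = c ∨ b = d

theorem FourCycleFree.map {G : SimpleGraph V} (hG : G.FourCycleFree) (f : V ↪ W) :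
    (G.map f).FourCycleFree := by
  intro _ _ _ _ hab hbc hcd hda
  obtain ⟨-, a, b, -, rfl, rfl⟩ := id hab
  obtain ⟨-, -, c, -, -, rfl⟩ := id hbc
  obtain ⟨-, -, d, -, -, rfl⟩ := id hcd
  rw [map_adj_apply] at hab hbc hcd hda
  simpa only [f.injective.eq_iff] using hG hab hbc hcd hda

theorem fourCycleFree_starGraph (r : V) : (starGraph r).FourCycleFree := by
  intro a b c d hab _ hcd hda
  simp only [starGraph_adj] at hab hcd hda
  grind

/-- The affine part of the Erdős–Rényi–Brown polarity graph. -/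
@[simps]
def polarityGraph (R : Type*) [CommRing R] : SimpleGraph (R × R) where
  Adj x y := x ≠ y ∧ x.2 + y.2 = x.1 * y.1
  symm := ⟨fun _ _ h ↦ ⟨h.1.symm, by rw [add_comm, mul_comm]; exact h.2⟩⟩

theorem fourCycleFree_polarityGraph (R : Type*) [CommRing R] [NoZeroDivisors R] :
    (polarityGraph R).FourCycleFree := by
  rintro a b c d ⟨-, hab⟩ ⟨-, hbc⟩ ⟨-, hcd⟩ ⟨-, hda⟩
  have hcross : (a.1 - c.1) * (b.1 - d.1) = 0 := by linear_combination hbc - hab + hda - hcd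
  rcases mul_eq_zero.mp hcross with h | h
  · left
    have h1 : a.1 = c.1 := sub_eq_zero.mp h
    exact Prod.ext h1 (by linear_combination hab - hbc + b.1 * h1)
  · right
    have h1 : b.1 = d.1 := sub_eq_zero.mp h
    exact Prod.ext h1 (by linear_combination hab - hda + a.1 * h1)

variable (F : Type*) [Field F] [Fintype F] [DecidableEq F]

theorem card_filter_snd_add_snd_eq_mul :
    #{xy : (F × F) × (F × F) | xy.1.2 + xy.2.2 = xy.1.1 * xy.2.1} = Fintype.card F ^ 3 := by
  rw [← Fintype.card_subtype, pow_succ, pow_two, ← Fintype.card_prod, ← Fintype.card_prod]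
  exact Fintype.card_congr
    { toFun xy := (xy.1.1, xy.1.2.1)
      invFun xa := ⟨(xa.1, (xa.2, xa.1.1 * xa.2 - xa.1.2)), by ring⟩
      left_inv xy := Subtype.ext <| Prod.ext rfl <| Prod.ext rfl <| by
        linear_combination -xy.2
      right_inv _ := rfl }

theorem card_filter_snd_add_snd_eq_mul_and_eq (h2 : (2 : F) ≠ 0) :
    #{xy : (F × F) × (F × F) | xy.1.2 + xy.2.2 = xy.1.1 * xy.2.1 ∧ xy.1 = xy.2} =
      Fintype.card F := by
  rw [← Fintype.card_subtype]
  exact Fintype.card_congr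
    { toFun xy := xy.1.1.1
      invFun a := ⟨((a, a * a / 2), (a, a * a / 2)), by field_simp; ring, rfl⟩
      left_inv := by
        rintro ⟨⟨x, y⟩, hxy, rfl : x = y⟩
        refine Subtype.ext <| Prod.ext (Prod.ext rfl ?_) (Prod.ext rfl ?_) <;>
        · field_simp; linear_combination -hxy
      right_inv _ := rfl }

theorem two_mul_card_edgeFinset_polarityGraph_add [DecidableRel (polarityGraph F).Adj]
    (h2 : (2 : F) ≠ 0) :
    2 * #(polarityGraph F).edgeFinset + Fintype.card F = Fintype.card F ^ 3 := by
  have hsplit := card_filter_add_card_filter_not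
    (s := {xy : (F × F) × (F × F) | xy.1.2 + xy.2.2 = xy.1.1 * xy.2.1}) (fun xy ↦ xy.1 ≠ xy.2)
  rw [filter_filter, filter_filter] at hsplit
  rw [two_mul_card_edgeFinset, ← card_filter_snd_add_snd_eq_mul,
    ← card_filter_snd_add_snd_eq_mul_and_eq F h2, ← hsplit]
  simp only [polarityGraph_adj, not_not, and_comm]

end SimpleGraph

open SimpleGraph

theorem rpow_three_halves {x : ℝ} (hx : 0 ≤ x) : x ^ (3 / 2 : ℝ) = x * √x := by
  rw [show (3 / 2 : ℝ) = 1 + 1 / 2 by norm_num, Real.rpow_add' hx (by norm_num), Real.rpow_one,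
    Real.sqrt_eq_rpow]

theorem exists_prime_sq_le_and_le_four_mul_sq {n : ℕ} (hn : 16 ≤ n) :
    ∃ p, p.Prime ∧ 3 ≤ p ∧ p ^ 2 ≤ n ∧ n ≤ 4 * p ^ 2 := by
  set k := n.sqrt
  have hk : 4 ≤ k := Nat.le_sqrt.mpr hn
  obtain ⟨p, hp, hkp, hpk⟩ := Nat.exists_prime_lt_and_le_two_mul (k / 2) (by omega)
  refine ⟨p, hp, by omega, ?_, ?_⟩
  · calc p ^ 2 ≤ k * k := by rw [sq]; exact Nat.mul_le_mul (by omega) (by omega)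
      _ ≤ n := Nat.sqrt_le n
  · calc n ≤ (k + 1) * (k + 1) := (Nat.lt_succ_sqrt n).le
      _ ≤ (2 * p) * (2 * p) := Nat.mul_le_mul (by omega) (by omega)
      _ = 4 * p ^ 2 := by ring

theorem rpow_three_halves_div_twenty_le_of_small {n e : ℕ} (hn : n ≤ 16) (he : e + 1 = n)
    (h2 : 2 ≤ n) : (n : ℝ) ^ (3 / 2 : ℝ) / 20 ≤ e := by
  have hsqrt : √(n : ℝ) ≤ 4 := Real.sqrt_le_iff.mpr ⟨by norm_num, by norm_num; exact_mod_cast hn⟩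
  have he' : (e : ℝ) + 1 = n := by exact_mod_cast he
  have h2' : (2 : ℝ) ≤ n := by exact_mod_cast h2
  rw [rpow_three_halves n.cast_nonneg]
  nlinarith

theorem rpow_three_halves_div_twenty_le_of_large {n p e : ℕ} (hp : 3 ≤ p) (hn : n ≤ 4 * p ^ 2)
    (he : 2 * e + p = p ^ 3) : (n : ℝ) ^ (3 / 2 : ℝ) / 20 ≤ e := by
  have hn' : (n : ℝ) ≤ (2 * p) ^ 2 := by rw [mul_pow]; exact_mod_cast hn
  have hsqrt : √(n : ℝ) ≤ 2 * p := Real.sqrt_le_iff.mpr ⟨by positivity, hn'⟩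
  have he' : 2 * (e : ℝ) + p = p ^ 3 := by exact_mod_cast he
  have hp' : (3 : ℝ) ≤ p := by exact_mod_cast hp
  rw [rpow_three_halves n.cast_nonneg]
  calc (n : ℝ) * √n / 20 ≤ (2 * p) ^ 2 * (2 * p) / 20 := by gcongr
    _ ≤ e := by nlinarith

theorem exists_bool_adj_of_fourCycleFree {n : ℕ} (G : SimpleGraph (Fin n)) [DecidableRel G.Adj]
    (hG : G.FourCycleFree) (hcard : (n : ℝ) ^ (3 / 2 : ℝ) / 20 ≤ #G.edgeFinset) :
    ∃ Adj : Fin n → Fin n → Bool,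
      (∀ x : Fin n, Adj x x = false) ∧
      (∀ x y : Fin n, Adj x y = Adj y x) ∧
      ((Finset.univ.filter fun p : Fin n × Fin n => Adj p.1 p.2 = true).card : ℝ) / 2 ≥
        (n : ℝ) ^ ((3 : ℝ) / 2) / 20 ∧
      ¬ ∃ a b c d : Fin n, a ≠ b ∧ a ≠ c ∧ a ≠ d ∧ b ≠ c ∧ b ≠ d ∧ c ≠ d ∧
          Adj a b = true ∧ Adj b c = true ∧ Adj c d = true ∧ Adj d a = true := by
  refine ⟨fun x y ↦ decide (G.Adj x y), by simp, fun x y ↦ by simp [G.adj_comm], ?_, ?_⟩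
  · simp only [decide_eq_true_eq, ← two_mul_card_edgeFinset]
    push_cast
    linarith
  · rintro ⟨a, b, c, d, -, hac, -, -, hbd, -, hab, hbc, hcd, hda⟩
    simp only [decide_eq_true_eq] at hab hbc hcd hda
    exact (hG hab hbc hcd hda).elim hac hbd

/-- For every `n ≥ 2` there is a finite simple graph on `n` vertices with at least
`n^{3/2}/20` edges and with no cycle of length four.  The graph is given by a symmetric,
irreflexive boolean adjacency function; the number of edges is half the number of ordered
adjacent pairs. -/
theorem stmt16 (n : ℕ) (hn : 2 ≤ n) :
    ∃ Adj : Fin n → Fin n → Bool,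
      (∀ x : Fin n, Adj x x = false) ∧
      (∀ x y : Fin n, Adj x y = Adj y x) ∧
      ((Finset.univ.filter fun p : Fin n × Fin n => Adj p.1 p.2 = true).card : ℝ) / 2 ≥
        (n : ℝ) ^ ((3 : ℝ) / 2) / 20 ∧
      ¬ ∃ a b c d : Fin n, a ≠ b ∧ a ≠ c ∧ a ≠ d ∧ b ≠ c ∧ b ≠ d ∧ c ≠ d ∧
          Adj a b = true ∧ Adj b c = true ∧ Adj c d = true ∧ Adj d a = true := by
  classical
  rcases le_or_gt n 16 with hsmall | hlarge
  · let r : Fin n := ⟨0, by omega⟩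
    refine exists_bool_adj_of_fourCycleFree (starGraph r) (fourCycleFree_starGraph r) ?_
    refine rpow_three_halves_div_twenty_le_of_small hsmall ?_ hn
    simpa using (isTree_starGraph r).card_edgeFinset
  · obtain ⟨p, hp, hp3, hpn, hnp⟩ := exists_prime_sq_le_and_le_four_mul_sq hlarge.le
    have : Fact p.Prime := ⟨hp⟩
    obtain ⟨f⟩ := Function.Embedding.nonempty_of_card_le (α := ZMod p × ZMod p) (β := Fin n)
      (by simpa [sq] using hpn)
    refine exists_bool_adj_of_fourCycleFree _ ((fourCycleFree_polarityGraph _).map f) ?_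
    rw [card_edgeFinset_map]
    refine rpow_three_halves_div_twenty_le_of_large hp3 hnp ?_
    have h2 : (2 : ZMod p) ≠ 0 := Ring.two_ne_zero (by rw [ZMod.ringChar_zmod_n]; omega)
    simpa using two_mul_card_edgeFinset_polarityGraph_add (ZMod p) h2
end

section
/- Let d ≥ 1 and let D be a d-regular oriented graph on n vertices (every vertex has out-degree d and in-degree d). Then there exist subsets A, B of V(D) with e(A,B) ≥ n/4 and e(B,A) = 0. -/
open Finset

/-! Color the vertices uniformly at random with `d + 1` colors, let `A` be the vertices of
color `0` and `B` the vertices with no out-neighbour in `A`, so that `e(B, A) = 0`. An arc `uv`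
lies in `A × B` exactly when `u` has color `0` and none of the `d` out-neighbours of `v` has
(`u` is not one of them, as `D` is oriented); this has probability `(1/(d+1)) (d/(d+1))^d`. Hence
`e(A, B)` has expectation `n (d/(d+1))^(d+1) ≥ n/4`, because `(1 + 1/d)^(d+1) ≤ 4` for `d ≥ 1`. -/

lemma one_add_inv_pow_succ_le_four {d : ℕ} (hd : 1 ≤ d) : (1 + (d : ℝ)⁻¹) ^ (d + 1) ≤ 4 := by
  obtain rfl | rfl | hd3 : d = 1 ∨ d = 2 ∨ 3 ≤ d := by omega
  · norm_num
  · norm_num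
  have hinv : (d : ℝ)⁻¹ ≤ 3⁻¹ := inv_anti₀ (by norm_num) (by exact_mod_cast hd3)
  calc (1 + (d : ℝ)⁻¹) ^ (d + 1) = (1 + (d : ℝ)⁻¹) ^ d * (1 + (d : ℝ)⁻¹) := pow_succ _ _
    _ ≤ Real.exp 1 * (1 + 3⁻¹) := by
        gcongr
        · exact Real.one_add_inv_pow_le_exp
    _ ≤ 3 * (1 + 3⁻¹) := by gcongr; exact Real.exp_one_lt_three.le
    _ = 4 := by norm_num

lemma succ_pow_succ_le_four_mul_pow_succ {d : ℕ} (hd : 1 ≤ d) :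
    (d + 1) ^ (d + 1) ≤ 4 * d ^ (d + 1) := by
  have hd0 : (d : ℝ) ≠ 0 := by positivity
  have key : ((d + 1 : ℕ) : ℝ) ^ (d + 1) = (1 + (d : ℝ)⁻¹) ^ (d + 1) * (d : ℝ) ^ (d + 1) := by
    rw [← mul_pow]; congr 1; push_cast; field_simp
  exact_mod_cast key ▸ mul_le_mul_of_nonneg_right (one_add_inv_pow_succ_le_four hd) (by positivity)

/-- No hypothesis on `n` is needed: for `n ≤ d` the truncated exponent `n - 1 - d` is `0`. -/
lemma succ_pow_le_four_mul_pow_succ_mul {d : ℕ} (hd : 1 ≤ d) (n : ℕ) :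
    (d + 1) ^ n ≤ 4 * d ^ (d + 1) * (d + 1) ^ (n - 1 - d) :=
  calc (d + 1) ^ n ≤ (d + 1) ^ (d + 1 + (n - 1 - d)) := Nat.pow_le_pow_right d.succ_pos (by omega)
    _ = (d + 1) ^ (d + 1) * (d + 1) ^ (n - 1 - d) := pow_add _ _ _
    _ ≤ 4 * d ^ (d + 1) * (d + 1) ^ (n - 1 - d) :=
        Nat.mul_le_mul_right _ (succ_pow_succ_le_four_mul_pow_succ hd)

section Colorings

variable {V : Type*} [Fintype V] [DecidableEq V]

lemma card_colorings_zero_at_nonzero_on (m : ℕ) {u : V} {S : Finset V} (hu : u ∉ S) :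
    #{f : V → Fin (m + 1) | f u = 0 ∧ ∀ w ∈ S, f w ≠ 0}
      = m ^ #S * (m + 1) ^ (Fintype.card V - 1 - #S) := by
  let c : V → Finset (Fin (m + 1)) := fun w => if w ∈ S then {0}ᶜ else if w = u then {0} else univ
  have hc : ({f : V → Fin (m + 1) | f u = 0 ∧ ∀ w ∈ S, f w ≠ 0} : Finset _)
      = Fintype.piFinset c := by
    ext f
    simp only [mem_filter, mem_univ, true_and, Fintype.mem_piFinset]
    constructor
    · rintro ⟨hfu, hfS⟩ w
      by_cases hw : w ∈ S
      · simp [c, hw, hfS w hw]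
      · by_cases hwu : w = u
        · subst hwu; simp [c, hu, hfu]
        · simp [c, hw, hwu]
    · intro hf
      refine ⟨by simpa [c, hu] using hf u, fun w hw => by simpa [c, hw] using hf w⟩
  have hu' : u ∈ Sᶜ := mem_compl.2 hu
  rw [hc, Fintype.card_piFinset]
  calc ∏ w, #(c w) = ∏ w, if w ∈ S then m else if w = u then 1 else m + 1 := by
        refine prod_congr rfl fun w _ => ?_
        split_ifs <;> simp [c, *, card_compl]
    _ = m ^ #S * ∏ w ∈ Sᶜ, if w = u then 1 else m + 1 := by
        rw [prod_ite, prod_const, filter_mem_eq_inter, univ_inter, filter_not,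
          filter_mem_eq_inter, univ_inter, ← compl_eq_univ_sdiff]
    _ = m ^ #S * ∏ w ∈ Sᶜ.erase u, (m + 1) := by
        rw [← mul_prod_erase _ _ hu', if_pos rfl, one_mul]
        exact congrArg _ (prod_congr rfl fun w hw => if_neg (ne_of_mem_erase hw))
    _ = m ^ #S * (m + 1) ^ (Fintype.card V - 1 - #S) := by
        rw [prod_const, card_erase_of_mem hu', card_compl]
        congr 2
        omega

end Colorings

section OrientedGraph

variable {V : Type*} [Fintype V] (Adj : V → V → Prop) [DecidableRel Adj]

def avoidingSet (A : Finset V) : Finset V := {x | ∀ y ∈ A, ¬ Adj x y}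

lemma arcsFrom_avoidingSet_eq_zero (A : Finset V) : arcsFrom Adj (avoidingSet Adj A) A = 0 := by
  simp only [arcsFrom, card_eq_zero, filter_eq_empty_iff, mem_product, avoidingSet, mem_filter,
    mem_univ, true_and]
  exact fun p hp => hp.1 p.2 hp.2

def zeroSet {m : ℕ} (f : V → Fin (m + 1)) : Finset V := {x | f x = 0}

lemma card_colorings_arc_zeroSet_avoidingSet [DecidableEq V]
    (hasym : ∀ x y : V, Adj x y → ¬ Adj y x) {d : ℕ} (hout : ∀ v, #{w | Adj v w} = d) (u v : V) :
    #{f : V → Fin (d + 1) | Adj u v ∧ f u = 0 ∧ ∀ w, Adj v w → f w ≠ 0}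
      = if Adj u v then d ^ d * (d + 1) ^ (Fintype.card V - 1 - d) else 0 := by
  split_ifs with huv
  · have hu : u ∉ ({w | Adj v w} : Finset V) := by simpa using hasym u v huv
    have h := card_colorings_zero_at_nonzero_on d hu
    rw [hout v] at h
    simpa [huv] using h
  · simp [huv]

lemma sum_arcsFrom_zeroSet_avoidingSet [DecidableEq V] (hasym : ∀ x y : V, Adj x y → ¬ Adj y x)
    {d : ℕ} (hout : ∀ v, #{w | Adj v w} = d) :
    ∑ f : V → Fin (d + 1), arcsFrom Adj (zeroSet f) (avoidingSet Adj (zeroSet f))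
      = Fintype.card V * (d ^ (d + 1) * (d + 1) ^ (Fintype.card V - 1 - d)) := by
  let r : (V → Fin (d + 1)) → V × V → Prop := fun f p =>
    Adj p.1 p.2 ∧ f p.1 = 0 ∧ ∀ w, Adj p.2 w → f w ≠ 0
  have harcs : ∀ f, arcsFrom Adj (zeroSet f) (avoidingSet Adj (zeroSet f))
      = #(univ.bipartiteAbove r f) := by
    intro f
    unfold arcsFrom bipartiteAbove
    congr 1
    ext ⟨x, y⟩
    simp only [zeroSet, avoidingSet, mem_filter, mem_univ, true_and, mem_product, ne_eq, r]
    tauto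
  simp_rw [harcs, sum_card_bipartiteAbove_eq_sum_card_bipartiteBelow, bipartiteBelow, r,
    Fintype.sum_prod_type, card_colorings_arc_zeroSet_avoidingSet Adj hasym hout, ← sum_filter,
    sum_const, hout]
  rw [sum_const, card_univ, smul_eq_mul, smul_eq_mul]
  ring

end OrientedGraph

theorem stmt17_general {V : Type*} [Fintype V]
    (Adj : V → V → Prop) [DecidableRel Adj]
    (hasym : ∀ x y : V, Adj x y → ¬ Adj y x)
    (d : ℕ) (hd : 1 ≤ d)
    (hreg : ∀ v : V, (Finset.univ.filter fun w => Adj v w).card = d ∧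
        (Finset.univ.filter fun w => Adj w v).card = d) :
    ∃ A B : Finset V,
      (arcsFrom Adj A B : ℝ) ≥ (Fintype.card V : ℝ) / 4 ∧ arcsFrom Adj B A = 0 := by
  classical
  set n := Fintype.card V
  have haverage : ∑ _f : V → Fin (d + 1), n
      ≤ ∑ f : V → Fin (d + 1), 4 * arcsFrom Adj (zeroSet f) (avoidingSet Adj (zeroSet f)) := by
    rw [sum_const, card_univ, Fintype.card_fun, Fintype.card_fin, smul_eq_mul, ← mul_sum,
      sum_arcsFrom_zeroSet_avoidingSet Adj hasym fun v => (hreg v).1]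
    calc (d + 1) ^ n * n ≤ 4 * d ^ (d + 1) * (d + 1) ^ (n - 1 - d) * n :=
          Nat.mul_le_mul_right _ (succ_pow_le_four_mul_pow_succ_mul hd n)
      _ = 4 * (n * (d ^ (d + 1) * (d + 1) ^ (n - 1 - d))) := by ring
  obtain ⟨f, -, hf⟩ := exists_le_of_sum_le univ_nonempty haverage
  refine ⟨zeroSet f, avoidingSet Adj (zeroSet f), ?_, arcsFrom_avoidingSet_eq_zero Adj _⟩
  rw [ge_iff_le, div_le_iff₀ four_pos, mul_comm]
  exact_mod_cast hf

/-- In every `d`-regular oriented graph on `n` vertices there are subsets `A, B` of the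
vertex set with `e(A,B) ≥ n/4` and `e(B,A) = 0`. -/
theorem stmt17 {V : Type*} [Fintype V] [DecidableEq V]
    (Adj : V → V → Prop) [DecidableRel Adj]
    (hasym : ∀ x y : V, Adj x y → ¬ Adj y x)
    (d : ℕ) (hd : 1 ≤ d)
    (hreg : ∀ v : V, (Finset.univ.filter fun w => Adj v w).card = d ∧
        (Finset.univ.filter fun w => Adj w v).card = d) :
    ∃ A B : Finset V,
      (arcsFrom Adj A B : ℝ) ≥ (Fintype.card V : ℝ) / 4 ∧ arcsFrom Adj B A = 0 :=
  stmt17_general Adj hasym d hd hreg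
end

section
/- Let d ≥ 1 and let D be a d-regular oriented graph on n vertices. Then for each t with 1 ≤ t ≤ n−1 there exists a set A ⊆ V(D) with |A| = t and e^{(2)}(A) ≤ d^2·(t^2 − 1)/n, where e^{(2)}(A) denotes the number of directed paths of length two x→y, y→z with both x ∈ A and z ∈ A. -/
open Finset

/-! Average `e^{(2)}(A)` over all `t`-subsets `A`. Asymmetry makes the two endpoints of every
directed 2-path distinct, and a fixed pair of distinct vertices lies in a `C(t,2)/C(n,2)`
fraction of the `t`-subsets; since there are `n d²` directed 2-paths, the average is
`d² t (t - 1) / (n - 1)`. This is at most `d² (t² - 1) / n` because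
`(t - 1) (n - 1 - t) ≥ 0`, so some `t`-subset does at least as well as the average. -/

/-- `e^{(2)}(A)`: the number of directed paths of length two `x→y, y→z` with both
endpoints `x, z` in `A`. -/
def pathsTwoWithin {V : Type*} [Fintype V] [DecidableEq V]
    (Adj : V → V → Prop) [DecidableRel Adj] (A : Finset V) : ℕ :=
  (Finset.univ.filter fun t : V × V × V =>
      t.1 ∈ A ∧ t.2.2 ∈ A ∧ Adj t.1 t.2.1 ∧ Adj t.2.1 t.2.2).card

theorem card_filter_powersetCard_superset_mul_choose {α : Type*} [Fintype α] [DecidableEq α]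
    (B : Finset α) (t : ℕ) :
    #{A ∈ powersetCard t univ | B ⊆ A} * (Fintype.card α).choose #B =
      (Fintype.card α).choose t * t.choose #B := by
  rcases le_or_gt #B t with hBt | htB
  · rw [card_filter_powersetCard_subset B (univ : Finset α) t (subset_univ B) hBt, card_univ,
      Nat.choose_mul hBt, mul_comm]
  · have hempty : {A ∈ powersetCard t (univ : Finset α) | B ⊆ A} = ∅ := by
      refine filter_eq_empty_iff.mpr fun A hA hBA => ?_
      have := card_le_card hBA
      rw [(mem_powersetCard.mp hA).2] at this
      omega
    rw [hempty, Nat.choose_eq_zero_of_lt htB]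
    simp

section TwoPaths

variable {V : Type*} [Fintype V] (Adj : V → V → Prop) [DecidableRel Adj]

def twoPaths : Finset (V × V × V) :=
  {p | Adj p.1 p.2.1 ∧ Adj p.2.1 p.2.2}

theorem card_twoPaths :
    #(twoPaths Adj) = ∑ y, #{x | Adj x y} * #{z | Adj y z} := by
  simp only [twoPaths, card_filter, Fintype.sum_prod_type, sum_mul_sum, ite_zero_mul_ite_zero,
    mul_one]
  rw [sum_comm]

theorem card_twoPaths_of_regular {d : ℕ}
    (hreg : ∀ v : V, (Finset.univ.filter fun w => Adj v w).card = d ∧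
        (Finset.univ.filter fun w => Adj w v).card = d) :
    #(twoPaths Adj) = Fintype.card V * d ^ 2 := by
  simp [card_twoPaths, hreg, sq]

variable [DecidableEq V]

theorem pathsTwoWithin_eq_card_filter_twoPaths (A : Finset V) :
    pathsTwoWithin Adj A = #{p ∈ twoPaths Adj | p.1 ∈ A ∧ p.2.2 ∈ A} := by
  simp only [pathsTwoWithin, twoPaths, filter_filter]
  congr 1
  ext p
  simp only [mem_filter]
  tauto

theorem sum_pathsTwoWithin_powersetCard_mul_choose_two (hasym : ∀ x y : V, Adj x y → ¬ Adj y x)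
    (t : ℕ) :
    (∑ A ∈ powersetCard t univ, pathsTwoWithin Adj A) * (Fintype.card V).choose 2 =
      (Fintype.card V).choose t * t.choose 2 * #(twoPaths Adj) := by
  have hpair : ∀ p ∈ twoPaths Adj,
      #{A ∈ powersetCard t univ | p.1 ∈ A ∧ p.2.2 ∈ A} * (Fintype.card V).choose 2 =
        (Fintype.card V).choose t * t.choose 2 := by
    rintro ⟨x, y, z⟩ hp
    simp only [twoPaths, mem_filter, mem_univ, true_and] at hp
    have hxz : x ≠ z := by rintro rfl; exact hasym _ _ hp.1 hp.2
    have := card_filter_powersetCard_superset_mul_choose ({x, z} : Finset V) t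
    simpa [card_pair hxz, insert_subset_iff] using this
  simp only [pathsTwoWithin_eq_card_filter_twoPaths, card_filter]
  rw [sum_comm, sum_mul, mul_comm _ #(twoPaths Adj), card_eq_sum_ones, sum_mul, one_mul]
  refine sum_congr rfl fun p hp => ?_
  rw [← hpair p hp, card_filter]

theorem sum_pathsTwoWithin_powersetCard_le (hasym : ∀ x y : V, Adj x y → ¬ Adj y x) {d : ℕ}
    (hreg : ∀ v : V, (Finset.univ.filter fun w => Adj v w).card = d ∧
        (Finset.univ.filter fun w => Adj w v).card = d)
    {t : ℕ} (ht1 : 1 ≤ t) (ht2 : t ≤ Fintype.card V - 1) :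
    ∑ A ∈ powersetCard t univ, (pathsTwoWithin Adj A : ℝ) ≤
      (Fintype.card V).choose t *
        ((d : ℝ) ^ 2 * ((t : ℝ) ^ 2 - 1) / (Fintype.card V : ℝ)) := by
  set n := Fintype.card V
  set S := ∑ A ∈ powersetCard t univ, (pathsTwoWithin Adj A : ℝ)
  have hcount : S * (n * (n - 1) / 2) = n.choose t * (t * (t - 1) / 2) * (n * d ^ 2) := by
    have := congrArg (Nat.cast : ℕ → ℝ)
      (sum_pathsTwoWithin_powersetCard_mul_choose_two Adj hasym t)
    push_cast [card_twoPaths_of_regular Adj hreg, Nat.cast_choose_two] at this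
    exact this
  have hn : (2 : ℝ) ≤ n := by exact_mod_cast (show 2 ≤ n by omega)
  have ht1' : (1 : ℝ) ≤ t := by exact_mod_cast ht1
  have ht2' : (t : ℝ) + 1 ≤ n := by exact_mod_cast (show t + 1 ≤ n by omega)
  have hS : S * (n - 1) = n.choose t * (t * (t - 1)) * d ^ 2 := by
    have hn0 : (n : ℝ) ≠ 0 := by positivity
    field_simp at hcount
    linear_combination hcount
  have hgap : 0 ≤ (n.choose t : ℝ) * d ^ 2 * ((t - 1) * (n - 1 - t)) := by
    have : (0 : ℝ) ≤ n - 1 - t := by linarith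
    exact mul_nonneg (by positivity) (mul_nonneg (sub_nonneg.mpr ht1') this)
  rw [mul_div_assoc', le_div_iff₀ (by positivity)]
  refine le_of_mul_le_mul_right ?_ (by linarith : (0 : ℝ) < n - 1)
  linear_combination n * hS + hgap

end TwoPaths

theorem stmt18_general {V : Type*} [Fintype V] [DecidableEq V]
    (Adj : V → V → Prop) [DecidableRel Adj]
    (hasym : ∀ x y : V, Adj x y → ¬ Adj y x)
    (d : ℕ)
    (hreg : ∀ v : V, (Finset.univ.filter fun w => Adj v w).card = d ∧
        (Finset.univ.filter fun w => Adj w v).card = d)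
    (t : ℕ) (ht1 : 1 ≤ t) (ht2 : t ≤ Fintype.card V - 1) :
    ∃ A : Finset V, A.card = t ∧
      (pathsTwoWithin Adj A : ℝ) ≤
        (d : ℝ) ^ 2 * ((t : ℝ) ^ 2 - 1) / (Fintype.card V : ℝ) := by
  have hne : (powersetCard t (univ : Finset V)).Nonempty :=
    powersetCard_nonempty.mpr (by rw [card_univ]; omega)
  have havg := sum_pathsTwoWithin_powersetCard_le Adj hasym hreg ht1 ht2
  rw [← card_univ, ← card_powersetCard, ← nsmul_eq_mul, ← sum_const] at havg
  obtain ⟨A, hA, hle⟩ := exists_le_of_sum_le hne havg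
  exact ⟨A, mem_powersetCard_univ.mp hA, hle⟩

/-- In a `d`-regular oriented graph on `n` vertices, for every `t` with `1 ≤ t ≤ n - 1`
there is a vertex subset `A` of size `t` with `e^{(2)}(A) ≤ d^2 (t^2 - 1) / n`. -/
theorem stmt18 {V : Type*} [Fintype V] [DecidableEq V]
    (Adj : V → V → Prop) [DecidableRel Adj]
    (hasym : ∀ x y : V, Adj x y → ¬ Adj y x)
    (d : ℕ) (hd : 1 ≤ d)
    (hreg : ∀ v : V, (Finset.univ.filter fun w => Adj v w).card = d ∧
        (Finset.univ.filter fun w => Adj w v).card = d)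
    (t : ℕ) (ht1 : 1 ≤ t) (ht2 : t ≤ Fintype.card V - 1) :
    ∃ A : Finset V, A.card = t ∧
      (pathsTwoWithin Adj A : ℝ) ≤
        (d : ℝ) ^ 2 * ((t : ℝ) ^ 2 - 1) / (Fintype.card V : ℝ) :=
  stmt18_general Adj hasym d hreg t ht1 ht2
end
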